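/- arXiv:1605.04209 — 7 statements merged into one kernel-verified Lean document; each statement's English description precedes it below -/
import Mathlib

section
/- Let a, b be real numbers with b < 0. There exists a constant C > 0 depending only on a and b such that for all real κ > 0 and A > 0 satisfying κ·A^b ≥ 1, one has ∫_0^A τ^(a-1) · exp(−κ·τ^b) dτ ≤ C · A^a · exp(−κ·A^b). -/
/-!
Write `x = (τ / A) ^ b ≥ 1` for `0 < τ ≤ A`. Since `κ A ^ b ≥ 1`, we have
`κ τ ^ b = (κ A ^ b) x ≥ κ A ^ b + x - 1`, so the weight `exp (-κ τ ^ b)` is at most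
`e · exp (-κ A ^ b) · exp (-x)`, and `exp (-x) ≤ n! x ^ (-n)` turns the factor `exp (-x)` into
the power `n! (τ / A) ^ (-b n)`. Choosing `n` with `a - b n > 0` makes the resulting power of `τ`
integrable at `0`, and integrating it over `(0, A]` gives `A ^ a` up to a constant.
-/

open MeasureTheory Real Set

open scoped Nat

lemma exp_neg_le_factorial_mul_rpow_neg {y : ℝ} (hy : 0 < y) (n : ℕ) :
    exp (-y) ≤ n ! * y ^ (-(n : ℝ)) := by
  rw [rpow_neg hy.le, rpow_natCast, exp_neg, ← div_eq_mul_inv,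
    inv_le_comm₀ (exp_pos y) (by positivity), inv_div]
  exact pow_div_factorial_le_exp y hy.le n

lemma exp_neg_mul_rpow_le_of_le {b κ A τ : ℝ} (hb : b ≤ 0) (hκA : 1 ≤ κ * A ^ b)
    (hτ : 0 < τ) (hτA : τ ≤ A) :
    exp (-κ * τ ^ b) ≤ exp 1 * exp (-κ * A ^ b) * exp (-(τ / A) ^ b) := by
  have hA : 0 < A := hτ.trans_le hτA
  have hx : 1 ≤ (τ / A) ^ b :=
    one_le_rpow_of_pos_of_le_one_of_nonpos (div_pos hτ hA) ((div_le_one hA).mpr hτA) hb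
  have hsplit : κ * τ ^ b = κ * A ^ b * (τ / A) ^ b := by
    rw [div_rpow hτ.le hA.le]
    field_simp
  rw [← exp_add, ← exp_add, exp_le_exp, neg_mul, neg_mul, hsplit]
  nlinarith [mul_nonneg (sub_nonneg.mpr hκA) (sub_nonneg.mpr hx)]

lemma exp_neg_mul_rpow_le_mul_rpow {b κ A τ : ℝ} (hb : b ≤ 0) (hκA : 1 ≤ κ * A ^ b)
    (hτ : 0 < τ) (hτA : τ ≤ A) (n : ℕ) :
    exp (-κ * τ ^ b) ≤ exp 1 * n ! * exp (-κ * A ^ b) * A ^ (b * n) * τ ^ (-(b * n)) := by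
  have hA : 0 < A := hτ.trans_le hτA
  have hpow : ((τ / A) ^ b) ^ (-(n : ℝ)) = A ^ (b * n) * τ ^ (-(b * n)) := by
    rw [← rpow_mul (div_pos hτ hA).le, div_rpow hτ.le hA.le, mul_neg, rpow_neg hA.le]
    field_simp
  calc exp (-κ * τ ^ b)
      ≤ exp 1 * exp (-κ * A ^ b) * exp (-(τ / A) ^ b) := exp_neg_mul_rpow_le_of_le hb hκA hτ hτA
    _ ≤ exp 1 * exp (-κ * A ^ b) * (n ! * ((τ / A) ^ b) ^ (-(n : ℝ))) := by
        gcongr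
        exact exp_neg_le_factorial_mul_rpow_neg (rpow_pos_of_pos (div_pos hτ hA) b) n
    _ = _ := by rw [hpow]; ring

lemma setIntegral_Ioc_zero_le_of_le_mul_rpow {f : ℝ → ℝ} {K r A : ℝ} (hr : -1 < r) (hA : 0 ≤ A)
    (hf₀ : ∀ τ ∈ Ioc 0 A, 0 ≤ f τ) (hf : ∀ τ ∈ Ioc 0 A, f τ ≤ K * τ ^ r) :
    ∫ τ in Ioc 0 A, f τ ≤ K * (A ^ (r + 1) / (r + 1)) := by
  have hint : IntegrableOn (fun τ ↦ K * τ ^ r) (Ioc 0 A) :=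
    ((intervalIntegrable_iff_integrableOn_Ioc_of_le hA).mp
      (intervalIntegral.intervalIntegrable_rpow' hr)).const_mul K
  calc ∫ τ in Ioc 0 A, f τ ≤ ∫ τ in Ioc 0 A, K * τ ^ r :=
        setIntegral_mono_of_nonneg hf₀ hf hint
    _ = K * (A ^ (r + 1) / (r + 1)) := by
        rw [integral_const_mul, ← intervalIntegral.integral_of_le hA, integral_rpow (Or.inl hr),
          zero_rpow (by linarith), sub_zero]

/-- Second case of display (2.6): for `b < 0` there is `C = C(a,b) > 0` such that
`∫_0^A τ^(a-1) exp(-κ τ^b) dτ ≤ C A^a exp(-κ A^b)` whenever `κ A^b ≥ 1`. -/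
theorem integral_Ioc_rpow_exp_neg_exponent (a b : ℝ) (hb : b < 0) :
    ∃ C : ℝ, 0 < C ∧ ∀ κ A : ℝ, 0 < κ → 0 < A → 1 ≤ κ * A ^ b →
      ∫ τ in Set.Ioc (0 : ℝ) A, τ ^ (a - 1) * Real.exp (-κ * τ ^ b) ≤
        C * A ^ a * Real.exp (-κ * A ^ b) := by
  obtain ⟨n, hn⟩ := exists_nat_gt (a / b)
  have hc : 0 < a - b * n := by
    have := (div_lt_iff_of_neg hb).mp hn
    linarith
  refine ⟨exp 1 * n ! / (a - b * n), by positivity, fun κ A _ hA hκA ↦ ?_⟩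
  set K := exp 1 * n ! * exp (-κ * A ^ b) * A ^ (b * n)
  have hbound : ∀ τ ∈ Ioc 0 A, τ ^ (a - 1) * exp (-κ * τ ^ b) ≤ K * τ ^ (a - b * n - 1) := by
    intro τ ⟨hτ, hτA⟩
    calc τ ^ (a - 1) * exp (-κ * τ ^ b) ≤ τ ^ (a - 1) * (K * τ ^ (-(b * n))) := by
          gcongr
          exact exp_neg_mul_rpow_le_mul_rpow hb.le hκA hτ hτA n
      _ = K * τ ^ (a - b * n - 1) := by
          rw [mul_left_comm, ← rpow_add hτ]
          ring_nf
  calc ∫ τ in Ioc 0 A, τ ^ (a - 1) * exp (-κ * τ ^ b)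
      ≤ K * (A ^ (a - b * n - 1 + 1) / (a - b * n - 1 + 1)) :=
        setIntegral_Ioc_zero_le_of_le_mul_rpow (by linarith) hA.le
          (fun τ hτ ↦ by have := hτ.1; positivity) hbound
    _ = exp 1 * n ! / (a - b * n) * A ^ a * exp (-κ * A ^ b) := by
        rw [sub_add_cancel, show A ^ a = A ^ (b * n) * A ^ (a - b * n) by
          rw [← rpow_add hA]; ring_nf]
        ring
end

section
/- Let D > 0 and 0 < γ < D+1 be real numbers, and let C_H, c_H, λ₁ > 0. There exist constants C > 0 and c > 0, depending only on D, γ, C_H, c_H and λ₁, with the following property. Let ρ ∈ (0,1] and let h : (0,∞) → ℝ be a measurable function satisfying 0 ≤ h(t) for all t > 0, h(t) ≤ C_H · t^(−D/(D+1)) · exp(−c_H · (ρ^(D+1)/t)^(γ/(D+1−γ))) for all 0 < t < 1, and h(t) ≤ C_H · exp(−λ₁·t) for all t ≥ 1. Then for every λ ≥ 0, ∫_0^∞ e^(−λt) · h(t) dt ≤ C · (1+λ)^(−1/(D+1)) · exp(−c · ρ^γ · λ^(γ/(D+1))). -/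
/-!
Split the Laplace integral at `t = 1`. For `t < 1`, weighted AM-GM with weights `θ = γ/(D+1)` and
`1 - θ` gives `λt/2 + c_H (ρ^(D+1)/t)^(γ/(D+1-γ)) ≥ c₀ ρ^γ λ^θ` uniformly in `t`, so half of the
damping `e^(-λt)` pays for the factor `exp(-c ρ^γ λ^θ)`, while the other half, against
`t^(-D/(D+1))`, integrates to `O((1+λ)^(-1/(D+1)))` by comparison with a Gamma integral.
For `t ≥ 1` the integral is `O(e^(-λ))`, and `e^(-λ)` is dominated by the right-hand side as soon
as `c + 1/(D+1) ≤ 1`.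
-/

open MeasureTheory Real Set

lemma rpow_le_one_add {x θ : ℝ} (hx : 0 ≤ x) (hθ0 : 0 ≤ θ) (hθ1 : θ ≤ 1) : x ^ θ ≤ 1 + x := by
  rcases le_total x 1 with hx1 | hx1
  · linarith [rpow_le_one hx hx1 hθ0]
  · calc x ^ θ ≤ x ^ (1 : ℝ) := rpow_le_rpow_of_exponent_le hx1 hθ1
      _ ≤ 1 + x := by rw [rpow_one]; linarith

lemma rpow_mul_rpow_le_mul_add_mul_div_rpow {θ β a b R t : ℝ} (hθ0 : 0 ≤ θ) (hθ1 : θ ≤ 1)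
    (hβ : β * (1 - θ) = θ) (ha : 0 ≤ a) (hb : 0 ≤ b) (hR : 0 ≤ R) (ht : 0 < t) :
    b ^ (1 - θ) * a ^ θ * R ^ θ ≤ a * t + b * (R / t) ^ β := by
  have hRt : 0 ≤ R / t := div_nonneg hR ht.le
  have hamgm := geom_mean_le_arith_mean2_weighted hθ0 (sub_nonneg.2 hθ1)
    (mul_nonneg ha ht.le) (mul_nonneg hb (rpow_nonneg hRt β)) (by ring)
  have hgeom : (a * t) ^ θ * (b * (R / t) ^ β) ^ (1 - θ) = b ^ (1 - θ) * a ^ θ * R ^ θ := by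
    rw [mul_rpow ha ht.le, mul_rpow hb (rpow_nonneg hRt β), ← rpow_mul hRt, hβ,
      div_rpow hR ht.le]
    field_simp [(rpow_pos_of_pos ht θ).ne']
  rw [← hgeom]
  linarith [mul_nonneg (sub_nonneg.2 hθ1) (mul_nonneg ha ht.le),
    mul_nonneg hθ0 (mul_nonneg hb (rpow_nonneg hRt β))]

lemma integrableOn_Ioo_rpow_mul_exp {p μ : ℝ} (hp : 0 < p) :
    IntegrableOn (fun t : ℝ => t ^ (p - 1) * exp (-(μ * t))) (Ioo 0 1) := by
  rw [← intervalIntegrable_iff_integrableOn_Ioo_of_le zero_le_one]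
  exact (intervalIntegral.intervalIntegrable_rpow' (by linarith)).mul_continuousOn
    (by fun_prop)

lemma setIntegral_Ioo_rpow_mul_exp_le {p μ : ℝ} (hp : 0 < p) (hμ : 0 ≤ μ) :
    ∫ t in Ioo 0 1, t ^ (p - 1) * exp (-(μ * t)) ≤ exp 1 * Gamma p * (1 + μ) ^ (-p) := by
  set F : ℝ → ℝ := fun t => t ^ (p - 1) * exp (-((1 + μ) * t))
  have hF : ∫ t in Ioi 0, F t = (1 + μ) ^ (-p) * Gamma p := by
    rw [integral_rpow_mul_exp_neg_mul_Ioi hp (by linarith), one_div,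
      inv_rpow (by linarith), rpow_neg (by linarith)]
  have hFint : IntegrableOn F (Ioi 0) :=
    Integrable.of_integral_ne_zero (by rw [hF]; positivity)
  -- trading the factor `e` for one more unit of decay turns the bound into a Gamma integral
  have hdamp : ∀ t ∈ Ioo (0 : ℝ) 1, t ^ (p - 1) * exp (-(μ * t)) ≤ exp 1 * F t := by
    intro t ht
    rw [mul_left_comm, ← exp_add]
    exact mul_le_mul_of_nonneg_left (exp_le_exp.2 (by linarith [ht.2]))
      (rpow_nonneg ht.1.le _)
  calc ∫ t in Ioo 0 1, t ^ (p - 1) * exp (-(μ * t))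
      ≤ ∫ t in Ioo 0 1, exp 1 * F t :=
        setIntegral_mono_on (integrableOn_Ioo_rpow_mul_exp hp)
          ((hFint.mono_set Ioo_subset_Ioi_self).const_mul _) measurableSet_Ioo hdamp
    _ ≤ ∫ t in Ioi 0, exp 1 * F t :=
        setIntegral_mono_set (hFint.const_mul _)
          ((ae_restrict_iff' measurableSet_Ioi).2 (ae_of_all _ fun t ht => by
            have := rpow_nonneg (le_of_lt ht) (p - 1); positivity))
          Ioo_subset_Ioi_self.eventuallyLE
    _ = exp 1 * Gamma p * (1 + μ) ^ (-p) := by rw [integral_const_mul, hF]; ring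

lemma one_add_half_rpow_neg_le {x p : ℝ} (hx : 0 ≤ x) (hp : 0 ≤ p) :
    (1 + x / 2) ^ (-p) ≤ 2 ^ p * (1 + x) ^ (-p) := by
  calc (1 + x / 2) ^ (-p) ≤ ((1 + x) / 2) ^ (-p) :=
        rpow_le_rpow_of_nonpos (by positivity) (by linarith) (neg_nonpos.2 hp)
    _ = 2 ^ p * (1 + x) ^ (-p) := by
        rw [div_rpow (by linarith) zero_le_two, rpow_neg zero_le_two, div_inv_eq_mul, mul_comm]

lemma exp_neg_le_exp_one_mul_rpow_neg_mul_exp {x p c θ r : ℝ} (hx : 0 ≤ x) (hp : 0 ≤ p)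
    (hc : 0 ≤ c) (hpc : p + c ≤ 1) (hθ0 : 0 ≤ θ) (hθ1 : θ ≤ 1) (hr1 : r ≤ 1) :
    exp (-x) ≤ exp 1 * (1 + x) ^ (-p) * exp (-c * r * x ^ θ) := by
  have hpow : exp (-(p * x)) ≤ (1 + x) ^ (-p) := by
    rw [show -(p * x) = x * -p by ring, exp_mul]
    exact rpow_le_rpow_of_nonpos (by positivity) (by linarith [add_one_le_exp x])
      (neg_nonpos.2 hp)
  have hdecay : c * r * x ^ θ ≤ c * (1 + x) := by
    have hrx : r * x ^ θ ≤ 1 + x := (mul_le_mul hr1 (rpow_le_one_add hx hθ0 hθ1)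
      (rpow_nonneg hx θ) zero_le_one).trans_eq (one_mul _)
    rw [mul_assoc]
    exact mul_le_mul_of_nonneg_left hrx hc
  calc exp (-x) ≤ exp (1 + -(p * x) + -c * r * x ^ θ) :=
        exp_le_exp.2 (by nlinarith [mul_nonneg hx (sub_nonneg.2 hpc)])
    _ = exp 1 * exp (-(p * x)) * exp (-c * r * x ^ θ) := by rw [exp_add, exp_add]
    _ ≤ exp 1 * (1 + x) ^ (-p) * exp (-c * r * x ^ θ) := by gcongr

lemma setIntegral_union_le_of_le {α : Type*} [MeasurableSpace α] {μ : Measure α}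
    {f g₁ g₂ : α → ℝ} {s u : Set α} (hsu : Disjoint s u) (hs : MeasurableSet s)
    (hu : MeasurableSet u) (hf : AEStronglyMeasurable f μ) (hf0 : ∀ x ∈ s ∪ u, 0 ≤ f x)
    (hg₁ : IntegrableOn g₁ s μ) (hg₂ : IntegrableOn g₂ u μ) (h₁ : ∀ x ∈ s, f x ≤ g₁ x)
    (h₂ : ∀ x ∈ u, f x ≤ g₂ x) :
    ∫ x in s ∪ u, f x ∂μ ≤ ∫ x in s, g₁ x ∂μ + ∫ x in u, g₂ x ∂μ := by
  have hfs : IntegrableOn f s μ := hg₁.mono' hf.restrict <| ae_restrict_of_forall_mem hs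
    fun x hx => (norm_of_nonneg (hf0 x (Or.inl hx))).trans_le (h₁ x hx)
  have hfu : IntegrableOn f u μ := hg₂.mono' hf.restrict <| ae_restrict_of_forall_mem hu
    fun x hx => (norm_of_nonneg (hf0 x (Or.inr hx))).trans_le (h₂ x hx)
  rw [setIntegral_union hsu hu hfs hfu]
  exact add_le_add (setIntegral_mono_on hfs hg₁ hs h₁) (setIntegral_mono_on hfu hg₂ hu h₂)

lemma subgaussian_exponent_le {D γ c_H ρ t lam : ℝ} (hγ0 : 0 ≤ γ) (hγ : γ < D + 1)
    (hcH : 0 ≤ c_H) (hρ : 0 ≤ ρ) (ht : 0 < t) (hlam : 0 ≤ lam) :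
    c_H ^ (1 - γ / (D + 1)) / 2 ^ (γ / (D + 1)) * ρ ^ γ * lam ^ (γ / (D + 1)) ≤
      lam / 2 * t + c_H * (ρ ^ (D + 1) / t) ^ (γ / (D + 1 - γ)) := by
  have hD1 : 0 < D + 1 := by linarith
  have hDγ : 0 < D + 1 - γ := by linarith
  convert rpow_mul_rpow_le_mul_add_mul_div_rpow (β := γ / (D + 1 - γ)) (div_nonneg hγ0 hD1.le)
    ((div_le_one hD1).2 hγ.le) (by field_simp) (div_nonneg hlam zero_le_two) hcH
    (rpow_nonneg hρ (D + 1)) ht using 1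
  rw [div_rpow hlam zero_le_two, ← rpow_mul hρ, mul_div_cancel₀ γ hD1.ne']
  ring

lemma exp_neg_mul_le_of_le_subgaussian {D γ C_H c_H ρ lam t y c : ℝ} (hγ0 : 0 ≤ γ)
    (hγ : γ < D + 1) (hCH : 0 ≤ C_H) (hcH : 0 ≤ c_H) (hρ : 0 ≤ ρ) (hlam : 0 ≤ lam) (ht : 0 < t)
    (hc : c ≤ c_H ^ (1 - γ / (D + 1)) / 2 ^ (γ / (D + 1)))
    (hy : y ≤ C_H * t ^ (-(D / (D + 1))) *
      exp (-c_H * (ρ ^ (D + 1) / t) ^ (γ / (D + 1 - γ)))) :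
    exp (-lam * t) * y ≤ C_H * exp (-c * ρ ^ γ * lam ^ (γ / (D + 1))) *
      (t ^ (1 / (D + 1) - 1) * exp (-(lam / 2 * t))) := by
  have hD1 : 0 < D + 1 := by linarith
  set Y := (ρ ^ (D + 1) / t) ^ (γ / (D + 1 - γ))
  have hexponent : c * ρ ^ γ * lam ^ (γ / (D + 1)) ≤ lam / 2 * t + c_H * Y := by
    refine le_trans ?_ (subgaussian_exponent_le hγ0 hγ hcH hρ ht hlam)
    gcongr
  rw [show -(D / (D + 1)) = 1 / (D + 1) - 1 by field_simp; ring] at hy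
  calc exp (-lam * t) * y
      ≤ exp (-lam * t) * (C_H * t ^ (1 / (D + 1) - 1) * exp (-c_H * Y)) :=
        mul_le_mul_of_nonneg_left hy (exp_pos _).le
    _ = C_H * t ^ (1 / (D + 1) - 1) * exp (-(lam / 2 * t) - (lam / 2 * t + c_H * Y)) := by
        rw [show -(lam / 2 * t) - (lam / 2 * t + c_H * Y) = -lam * t + -c_H * Y by ring, exp_add]
        ring
    _ ≤ C_H * t ^ (1 / (D + 1) - 1) *
          exp (-(lam / 2 * t) + -c * ρ ^ γ * lam ^ (γ / (D + 1))) := by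
        gcongr
        linarith
    _ = C_H * exp (-c * ρ ^ γ * lam ^ (γ / (D + 1))) *
          (t ^ (1 / (D + 1) - 1) * exp (-(lam / 2 * t))) := by
        rw [exp_add]
        ring

lemma exp_neg_mul_le_of_le_exp_decay {C_H lam lam₁ t y : ℝ} (hCH : 0 ≤ C_H) (hlam : 0 ≤ lam)
    (ht : 1 ≤ t) (hy : y ≤ C_H * exp (-lam₁ * t)) :
    exp (-lam * t) * y ≤ C_H * exp (-lam) * exp (-lam₁ * t) := by
  calc exp (-lam * t) * y ≤ exp (-lam * t) * (C_H * exp (-lam₁ * t)) :=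
        mul_le_mul_of_nonneg_left hy (exp_pos _).le
    _ ≤ exp (-lam) * (C_H * exp (-lam₁ * t)) := by gcongr; nlinarith
    _ = C_H * exp (-lam) * exp (-lam₁ * t) := by ring

lemma setIntegral_Ioi_le_of_le_rpow_mul_exp {f : ℝ → ℝ} {p μ κ A B : ℝ} (hp : 0 < p)
    (hκ : 0 < κ) (hf : AEStronglyMeasurable f) (hf0 : ∀ t > 0, 0 ≤ f t)
    (hsmall : ∀ t ∈ Ioo 0 1, f t ≤ A * (t ^ (p - 1) * exp (-(μ * t))))
    (hlarge : ∀ t, 1 ≤ t → f t ≤ B * exp (-κ * t)) :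
    ∫ t in Ioi 0, f t ≤
      A * (∫ t in Ioo 0 1, t ^ (p - 1) * exp (-(μ * t))) + B * ∫ t in Ici 1, exp (-κ * t) := by
  have hdecay : IntegrableOn (fun t => exp (-κ * t)) (Ici 1) :=
    (integrableOn_Ici_iff_integrableOn_Ioi (by simp)).2 (exp_neg_integrableOn_Ioi 1 hκ)
  rw [← integral_const_mul, ← integral_const_mul, ← Ioo_union_Ici_eq_Ioi one_pos]
  refine setIntegral_union_le_of_le ((Iio_disjoint_Ici le_rfl).mono_left Ioo_subset_Iio_self)
    measurableSet_Ioo measurableSet_Ici hf ?_ ((integrableOn_Ioo_rpow_mul_exp hp).const_mul _)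
    (hdecay.const_mul _) hsmall hlarge
  rw [Ioo_union_Ici_eq_Ioi one_pos]
  exact hf0

/-- Proposition 2.1: resolvent-kernel bound from sub-Gaussian heat kernel upper bounds. -/
theorem resolvent_kernel_bound (D γ C_H c_H lam₁ : ℝ) (hD : 0 < D) (hγ0 : 0 < γ)
    (hγ : γ < D + 1) (hCH : 0 < C_H) (hcH : 0 < c_H) (hlam₁ : 0 < lam₁) :
    ∃ C : ℝ, 0 < C ∧ ∃ c : ℝ, 0 < c ∧
      ∀ ρ : ℝ, 0 < ρ → ρ ≤ 1 →
      ∀ h : ℝ → ℝ, Measurable h →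
        (∀ t : ℝ, 0 < t → 0 ≤ h t) →
        (∀ t : ℝ, 0 < t → t < 1 →
          h t ≤ C_H * t ^ (-(D / (D + 1))) *
            Real.exp (-c_H * (ρ ^ (D + 1) / t) ^ (γ / (D + 1 - γ)))) →
        (∀ t : ℝ, 1 ≤ t → h t ≤ C_H * Real.exp (-lam₁ * t)) →
        ∀ lam : ℝ, 0 ≤ lam →
          ∫ t in Set.Ioi (0 : ℝ), Real.exp (-lam * t) * h t ≤
            C * (1 + lam) ^ (-(1 / (D + 1))) *
              Real.exp (-c * ρ ^ γ * lam ^ (γ / (D + 1))) := by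
  have hD1 : 0 < D + 1 := by linarith
  have hp : 0 < 1 / (D + 1) := by positivity
  have hpD : 1 / (D + 1) + D / (D + 1) = 1 := by field_simp; ring
  set M := ∫ t in Ici 1, exp (-lam₁ * t)
  have hM : 0 ≤ M := setIntegral_nonneg measurableSet_Ici fun t _ => (exp_pos _).le
  set c₀ := c_H ^ (1 - γ / (D + 1)) / 2 ^ (γ / (D + 1))
  refine ⟨C_H * exp 1 * (Gamma (1 / (D + 1)) * 2 ^ (1 / (D + 1)) + M),
    mul_pos (by positivity) (add_pos_of_pos_of_nonneg (by positivity) hM),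
    min c₀ (D / (D + 1)), lt_min (by positivity) (by positivity), ?_⟩
  intro ρ hρ0 hρ1 h hmeas h0 hsmall hlarge lam hlam
  set E := exp (-min c₀ (D / (D + 1)) * ρ ^ γ * lam ^ (γ / (D + 1)))
  set X := (1 + lam) ^ (-(1 / (D + 1)))
  have htail : exp (-lam) ≤ exp 1 * X * E :=
    exp_neg_le_exp_one_mul_rpow_neg_mul_exp hlam hp.le (by positivity)
      ((add_le_add le_rfl (min_le_right _ _)).trans_eq hpD) (by positivity)
      ((div_le_one hD1).2 hγ.le) (rpow_le_one hρ0.le hρ1 hγ0.le)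
  have hgamma := setIntegral_Ioo_rpow_mul_exp_le hp (by positivity : 0 ≤ lam / 2)
  calc ∫ t in Ioi 0, exp (-lam * t) * h t
      ≤ C_H * E * (∫ t in Ioo 0 1, t ^ (1 / (D + 1) - 1) * exp (-(lam / 2 * t))) +
          C_H * exp (-lam) * M :=
        setIntegral_Ioi_le_of_le_rpow_mul_exp hp hlam₁ (by fun_prop)
          (fun t ht => mul_nonneg (exp_pos _).le (h0 t ht))
          (fun t ht => exp_neg_mul_le_of_le_subgaussian hγ0.le hγ hCH.le hcH.le hρ0.le hlam ht.1
            (min_le_left _ _) (hsmall t ht.1 ht.2))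
          (fun t ht => exp_neg_mul_le_of_le_exp_decay hCH.le hlam ht (hlarge t ht))
    _ ≤ C_H * E * (exp 1 * Gamma (1 / (D + 1)) * (2 ^ (1 / (D + 1)) * X)) +
          C_H * (exp 1 * X * E) * M := by
        gcongr
        exact hgamma.trans (by gcongr; exact one_add_half_rpow_neg_le hlam hp.le)
    _ = C_H * exp 1 * (Gamma (1 / (D + 1)) * 2 ^ (1 / (D + 1)) + M) * X * E := by ring
end

section
/- Let D > 0, 0 < γ < D+1, c > 0 and C₀ > 0 be real numbers, and let s ∈ (0,1) satisfy s·(D+1) < D. There exists a constant C₁ > 0, depending only on D, γ, c, C₀ and s, with the following property. Let ρ > 0 and let G : (0,∞) → ℝ be a measurable function satisfying 0 ≤ G(λ) ≤ C₀ · (1+λ)^(−1/(D+1)) · exp(−c · ρ^γ · λ^(γ/(D+1))) for all λ > 0. Then ∫_0^∞ λ^(−s) · G(λ) dλ ≤ C₁ · ρ^(s(D+1)−D). -/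
/-!
Bounding `(1 + λ)^(-1/(D+1))` by `λ^(-1/(D+1))` dominates the integrand by
`C₀ λ^(-p) exp(-c ρ^γ λ^q)` with `p = s + 1/(D+1) < 1` and `q = γ/(D+1)`. This is a Gamma-type
integral, homogeneous of degree `-(1-p)/q` in the coefficient `c ρ^γ` of the exponent, and
`(ρ^γ)^(-(1-p)/q) = ρ^(s(D+1) - D)`.
-/

open MeasureTheory Real Set

lemma setIntegral_mono_on_of_nonneg {α : Type*} [MeasurableSpace α] {μ : Measure α}
    {s : Set α} {f g : α → ℝ} (hs : MeasurableSet s) (hf : ∀ x ∈ s, 0 ≤ f x)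
    (hg : IntegrableOn g s μ) (hfg : ∀ x ∈ s, f x ≤ g x) :
    ∫ x in s, f x ∂μ ≤ ∫ x in s, g x ∂μ :=
  integral_mono_of_nonneg ((ae_restrict_iff' hs).mpr (.of_forall hf)) hg
    ((ae_restrict_iff' hs).mpr (.of_forall hfg))

lemma integral_rpow_mul_exp_neg_mul_rpow_pos {p q b : ℝ} (hp : 0 < p) (hq : -1 < q)
    (hb : 0 < b) : 0 < ∫ x in Ioi (0 : ℝ), x ^ q * exp (-b * x ^ p) := by
  rw [integral_rpow_mul_exp_neg_mul_rpow hp hq hb]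
  exact mul_pos (mul_pos (rpow_pos_of_pos hb _) (one_div_pos.mpr hp))
    (Gamma_pos_of_pos (div_pos (by linarith) hp))

lemma integral_rpow_mul_exp_neg_mul_mul_rpow {p q b B : ℝ} (hp : 0 < p) (hq : -1 < q)
    (hb : 0 < b) (hB : 0 < B) :
    ∫ x in Ioi (0 : ℝ), x ^ q * exp (-(b * B) * x ^ p) =
      B ^ (-(q + 1) / p) * ∫ x in Ioi (0 : ℝ), x ^ q * exp (-b * x ^ p) := by
  rw [integral_rpow_mul_exp_neg_mul_rpow hp hq (mul_pos hb hB),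
    integral_rpow_mul_exp_neg_mul_rpow hp hq hb, mul_rpow hb.le hB.le]
  ring

lemma rpow_neg_mul_le_of_le_one_add_rpow_neg {x s e C g E : ℝ} (hx : 0 < x) (he : 0 ≤ e)
    (hC : 0 ≤ C) (hE : 0 ≤ E) (hg : g ≤ C * (1 + x) ^ (-e) * E) :
    x ^ (-s) * g ≤ C * (x ^ (-(s + e)) * E) :=
  calc x ^ (-s) * g
      ≤ x ^ (-s) * (C * (1 + x) ^ (-e) * E) := mul_le_mul_of_nonneg_left hg (rpow_nonneg hx.le _)
    _ ≤ x ^ (-s) * (C * x ^ (-e) * E) := by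
        gcongr x ^ (-s) * (C * ?_ * E)
        exact rpow_le_rpow_of_nonpos hx (by linarith) (by linarith)
    _ = C * (x ^ (-(s + e)) * E) := by
        rw [neg_add, rpow_add hx]
        ring

theorem riesz_kernel_bound_general (D γ c C₀ s : ℝ) (hD : 0 < D) (hγ0 : 0 < γ)
    (hc : 0 < c) (hC₀ : 0 < C₀) (hsD : s * (D + 1) < D) :
    ∃ C₁ : ℝ, 0 < C₁ ∧
      ∀ ρ : ℝ, 0 < ρ →
      ∀ G : ℝ → ℝ, Measurable G →
        (∀ lam : ℝ, 0 < lam → 0 ≤ G lam ∧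
          G lam ≤ C₀ * (1 + lam) ^ (-(1 / (D + 1))) *
            Real.exp (-c * ρ ^ γ * lam ^ (γ / (D + 1)))) →
        ∫ lam in Set.Ioi (0 : ℝ), lam ^ (-s) * G lam ≤ C₁ * ρ ^ (s * (D + 1) - D) := by
  have hD1 : 0 < D + 1 := by linarith
  set q := γ / (D + 1)
  set p := s + 1 / (D + 1)
  have hq : 0 < q := div_pos hγ0 hD1
  have hp : -1 < -p := by
    have := (div_lt_iff₀ hD1).mpr (by linarith : 1 < (1 - s) * (D + 1))
    linarith
  set I := ∫ x in Ioi (0 : ℝ), x ^ (-p) * exp (-c * x ^ q)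
  refine ⟨C₀ * I, mul_pos hC₀ (integral_rpow_mul_exp_neg_mul_rpow_pos hq hp hc),
    fun ρ hρ G _ hG ↦ ?_⟩
  simp only [neg_mul c] at hG
  have hργ : 0 < ρ ^ γ := rpow_pos_of_pos hρ γ
  calc ∫ lam in Ioi (0 : ℝ), lam ^ (-s) * G lam
      ≤ ∫ lam in Ioi (0 : ℝ), C₀ * (lam ^ (-p) * exp (-(c * ρ ^ γ) * lam ^ q)) :=
        setIntegral_mono_on_of_nonneg measurableSet_Ioi
          (fun lam hlam ↦ mul_nonneg (rpow_nonneg hlam.out.le _) (hG lam hlam).1)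
          ((integrableOn_rpow_mul_exp_neg_mul_rpow hp hq (mul_pos hc hργ)).const_mul C₀)
          fun lam hlam ↦ rpow_neg_mul_le_of_le_one_add_rpow_neg hlam.out (by positivity) hC₀.le
            (exp_pos _).le (hG lam hlam).2
    _ = C₀ * I * (ρ ^ γ) ^ (-(-p + 1) / q) := by
        rw [integral_const_mul, integral_rpow_mul_exp_neg_mul_mul_rpow hq hp hc hργ]
        ring
    _ = C₀ * I * ρ ^ (s * (D + 1) - D) := by
        rw [← rpow_mul hρ.le]
        congr 2
        simp only [p, q]
        field_simp
        ring

/-- Proposition 2.2: bound for the Riesz kernel `K_s(x,y) = ∫_0^∞ λ^(-s) G_λ(x,y) dλ`. -/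
theorem riesz_kernel_bound (D γ c C₀ s : ℝ) (hD : 0 < D) (hγ0 : 0 < γ) (hγ : γ < D + 1)
    (hc : 0 < c) (hC₀ : 0 < C₀) (hs0 : 0 < s) (hs1 : s < 1) (hsD : s * (D + 1) < D) :
    ∃ C₁ : ℝ, 0 < C₁ ∧
      ∀ ρ : ℝ, 0 < ρ →
      ∀ G : ℝ → ℝ, Measurable G →
        (∀ lam : ℝ, 0 < lam → 0 ≤ G lam ∧
          G lam ≤ C₀ * (1 + lam) ^ (-(1 / (D + 1))) *
            Real.exp (-c * ρ ^ γ * lam ^ (γ / (D + 1)))) →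
        ∫ lam in Set.Ioi (0 : ℝ), lam ^ (-s) * G lam ≤ C₁ * ρ ^ (s * (D + 1) - D) :=
  riesz_kernel_bound_general D γ c C₀ s hD hγ0 hc hC₀ hsD
end

section
/- Let (X,d) be a metric space of diameter at most 1, μ a Borel measure on X, and let D > 0, C₀ > 0 be reals such that μ(B(x,r)) ≤ C₀·r^D for every x ∈ X and r > 0, where B(x,r) denotes the open ball of radius r about x. Let p ∈ (1,∞), s ∈ (0,1) with s·(D+1) > D/p, let C₁ > 0, and let K : X × X → ℝ be a measurable function with |K(x,y)| ≤ C₁·d(x,y)^(s(D+1)−D) for all x,y ∈ X. Then there is a constant C > 0 depending only on D, p, s, C₀ and C₁ such that for every f ∈ L^p(X,μ) and every x ∈ X, ∫_X |K(x,y)·f(y)| dμ(y) ≤ C·‖f‖_{L^p(μ)}. -/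
/-!
By Hölder's inequality it suffices to bound the `L^q` norm of `y ↦ d(x,y)^η`, where `q` is the
exponent conjugate to `p` and `η = s(D+1) - D`; the hypothesis `s(D+1) > D/p` says exactly that
`ηq > -D`. Since `d ≤ 1`, negative exponents are the only issue, and for `β ∈ (-D, 0]` the
integral of `d(x,·)^β` over the dyadic shell `2^{-n-1} < d(x,·) ≤ 2^{-n}` is at most
`2^{-(n+1)β} μ(B(x, 2^{1-n})) ≲ C₀ 2^{-n(β+D)}`, a convergent geometric series.
-/

open MeasureTheory Real
open scoped ENNReal

def UpperAhlforsRegular {X : Type*} [PseudoMetricSpace X] [MeasurableSpace X] (μ : Measure X)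
    (C₀ D : ℝ) : Prop :=
  ∀ (x : X) (r : ℝ), 0 < r → μ (Metric.ball x r) ≤ ENNReal.ofReal (C₀ * r ^ D)

lemma Real.rpow_le_rpow_min_zero {d : ℝ} (hd0 : 0 ≤ d) (hd1 : d ≤ 1) (η : ℝ) :
    d ^ η ≤ d ^ min η 0 := by
  rcases hd0.eq_or_lt with rfl | hd
  · rcases le_or_gt η 0 with hη | hη
    · rw [min_eq_left hη]
    · rw [min_eq_right hη.le, zero_rpow hη.ne', rpow_zero]
      exact zero_le_one
  · exact rpow_le_rpow_of_exponent_ge hd hd1 (min_le_left η 0)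

namespace UpperAhlforsRegular

variable {X : Type*} [PseudoMetricSpace X] [MeasurableSpace X] {μ : Measure X} {C₀ D : ℝ}

lemma measure_setOf_dist_eq_zero (hμ : UpperAhlforsRegular μ C₀ D) (hD : 0 < D) (x : X) :
    μ {y | dist x y = 0} = 0 := by
  have hball : ∀ r > 0, μ {y | dist x y = 0} ≤ ENNReal.ofReal (C₀ * r ^ D) := fun r hr =>
    (measure_mono fun y hy => by simp_all [Metric.mem_ball, dist_comm]).trans (hμ x r hr)
  have hlim : Filter.Tendsto (fun r : ℝ => ENNReal.ofReal (C₀ * r ^ D)) (nhdsWithin 0 (Set.Ioi 0))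
      (nhds 0) := by
    have := ((continuousAt_rpow_const 0 D (Or.inr hD.le)).const_mul C₀).tendsto
    simpa [zero_rpow hD.ne'] using (ENNReal.tendsto_ofReal this).mono_left nhdsWithin_le_nhds
  exact le_antisymm (ge_of_tendsto hlim (eventually_nhdsWithin_of_forall hball)) bot_le

lemma setLIntegral_dist_rpow_le (hμ : UpperAhlforsRegular μ C₀ D) {β : ℝ} (hβ : β ≤ 0) (x : X)
    (n : ℕ) :
    ∫⁻ y in {y | 2 ^ n ≤ (dist x y)⁻¹ ∧ (dist x y)⁻¹ < 2 ^ (n + 1)},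
        ENNReal.ofReal (dist x y ^ β) ∂μ ≤
      ENNReal.ofReal (C₀ * 2 ^ (D - β) * ((2 : ℝ) ^ (-β - D)) ^ n) := by
  set S := {y | 2 ^ n ≤ (dist x y)⁻¹ ∧ (dist x y)⁻¹ < 2 ^ (n + 1)}
  have hval : ∀ y ∈ S, ENNReal.ofReal (dist x y ^ β) ≤ ENNReal.ofReal ((2 ^ (n + 1)) ^ (-β)) := by
    rintro y ⟨hlo, hhi⟩
    have hd : 0 ≤ dist x y := dist_nonneg
    refine ENNReal.ofReal_le_ofReal ?_
    calc dist x y ^ β = (dist x y)⁻¹ ^ (-β) := by rw [inv_rpow hd, rpow_neg hd, inv_inv]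
      _ ≤ (2 ^ (n + 1)) ^ (-β) := rpow_le_rpow (inv_nonneg.2 hd) hhi.le (neg_nonneg.2 hβ)
  have hS : S ⊆ Metric.ball x (2 / 2 ^ n) := by
    rintro y ⟨hlo, -⟩
    have hpos : (0 : ℝ) < 2 ^ n := by positivity
    have hd : dist x y ≤ (2 ^ n)⁻¹ := (le_inv_comm₀ (inv_pos.1 (hpos.trans_le hlo)) hpos).2 hlo
    rw [Metric.mem_ball, dist_comm, div_eq_mul_inv]
    linarith [inv_pos.2 hpos]
  calc ∫⁻ y in S, ENNReal.ofReal (dist x y ^ β) ∂μ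
      ≤ ∫⁻ _ in S, ENNReal.ofReal ((2 ^ (n + 1)) ^ (-β)) ∂μ :=
        setLIntegral_mono measurable_const hval
    _ = ENNReal.ofReal ((2 ^ (n + 1)) ^ (-β)) * μ S := setLIntegral_const _ _
    _ ≤ ENNReal.ofReal ((2 ^ (n + 1)) ^ (-β)) * ENNReal.ofReal (C₀ * (2 / 2 ^ n) ^ D) := by
        gcongr
        exact (measure_mono hS).trans (hμ x _ (by positivity))
    _ = ENNReal.ofReal (C₀ * 2 ^ (D - β) * ((2 : ℝ) ^ (-β - D)) ^ n) := by
        rw [← ENNReal.ofReal_mul (by positivity), div_rpow (by norm_num) (by positivity),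
          ← rpow_natCast, ← rpow_natCast, ← rpow_natCast (2 ^ (-β - D)), ← rpow_mul two_pos.le,
          ← rpow_mul two_pos.le, ← rpow_mul two_pos.le, div_eq_mul_inv, ← rpow_neg two_pos.le,
          ← rpow_add two_pos, mul_left_comm, ← rpow_add two_pos, mul_assoc, ← rpow_add two_pos]
        congr 3
        push_cast
        ring

lemma lintegral_dist_rpow_le (hμ : UpperAhlforsRegular μ C₀ D) (hC₀ : 0 ≤ C₀) (hD : 0 < D) {x : X}
    (hx : ∀ y, dist x y ≤ 1) {β : ℝ} (hβ : β ≤ 0) (hβD : -D < β) :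
    ∫⁻ y, ENNReal.ofReal (dist x y ^ β) ∂μ ≤
      ENNReal.ofReal (C₀ * 2 ^ (D - β) / (1 - 2 ^ (-β - D))) := by
  set S : ℕ → Set X := fun n => {y | 2 ^ n ≤ (dist x y)⁻¹ ∧ (dist x y)⁻¹ < 2 ^ (n + 1)}
  set f : X → ℝ≥0∞ := fun y => ENNReal.ofReal (dist x y ^ β)
  have hcover : Set.univ ⊆ {y | dist x y = 0} ∪ ⋃ n, S n := by
    intro y _
    rcases (dist_nonneg (x := x) (y := y)).eq_or_lt with h | h
    · exact Or.inl h.symm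
    · obtain ⟨n, hn⟩ := exists_nat_pow_near ((one_le_inv₀ h).2 (hx y)) one_lt_two
      exact Or.inr (Set.mem_iUnion.2 ⟨n, hn⟩)
  have hr0 : (0 : ℝ) ≤ 2 ^ (-β - D) := by positivity
  have hr1 : (2 : ℝ) ^ (-β - D) < 1 := rpow_lt_one_of_one_lt_of_neg one_lt_two (by linarith)
  calc ∫⁻ y, f y ∂μ = ∫⁻ y in Set.univ, f y ∂μ := setLIntegral_univ _ |>.symm
    _ ≤ ∫⁻ y in {y | dist x y = 0}, f y ∂μ + ∫⁻ y in ⋃ n, S n, f y ∂μ :=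
        (lintegral_mono_set hcover).trans (lintegral_union_le _ _ _)
    _ ≤ ∑' n, ∫⁻ y in S n, f y ∂μ := by
        rw [setLIntegral_measure_zero _ _ (hμ.measure_setOf_dist_eq_zero hD x), zero_add]
        exact lintegral_iUnion_le _ _
    _ ≤ ∑' n : ℕ, ENNReal.ofReal (C₀ * 2 ^ (D - β) * ((2 : ℝ) ^ (-β - D)) ^ n) :=
        ENNReal.tsum_le_tsum fun n => hμ.setLIntegral_dist_rpow_le hβ x n
    _ = ENNReal.ofReal (C₀ * 2 ^ (D - β) / (1 - 2 ^ (-β - D))) := by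
        rw [← ENNReal.ofReal_tsum_of_nonneg, tsum_mul_left, tsum_geometric_of_lt_one hr0 hr1,
          div_eq_mul_inv]
        · exact fun n => by positivity
        · exact (summable_geometric_of_lt_one hr0 hr1).mul_left _

lemma eLpNorm_dist_rpow_le (hμ : UpperAhlforsRegular μ C₀ D) (hC₀ : 0 ≤ C₀) (hD : 0 < D) {x : X}
    (hx : ∀ y, dist x y ≤ 1) {η q : ℝ} (hq : 0 < q) (hηq : -D < min η 0 * q) :
    eLpNorm (fun y => dist x y ^ η) (ENNReal.ofReal q) μ ≤
      ENNReal.ofReal (C₀ * 2 ^ (D - min η 0 * q) / (1 - 2 ^ (-(min η 0 * q) - D))) ^ (1 / q) := by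
  have hmin : eLpNorm (fun y => dist x y ^ η) (ENNReal.ofReal q) μ ≤
      eLpNorm (fun y => dist x y ^ min η 0) (ENNReal.ofReal q) μ :=
    eLpNorm_mono_real fun y => by
      rw [norm_of_nonneg (rpow_nonneg dist_nonneg _)]
      exact rpow_le_rpow_min_zero dist_nonneg (hx y) η
  refine hmin.trans ?_
  rw [eLpNorm_eq_lintegral_rpow_enorm_toReal (by simpa using hq) ENNReal.ofReal_ne_top,
    ENNReal.toReal_ofReal hq.le]
  gcongr
  calc ∫⁻ y, ‖dist x y ^ min η 0‖ₑ ^ q ∂μ = ∫⁻ y, ENNReal.ofReal (dist x y ^ (min η 0 * q)) ∂μ := by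
        refine lintegral_congr fun y => ?_
        rw [Real.enorm_eq_ofReal (rpow_nonneg dist_nonneg _),
          ENNReal.ofReal_rpow_of_nonneg (rpow_nonneg dist_nonneg _) hq.le, ← rpow_mul dist_nonneg]
    _ ≤ _ := hμ.lintegral_dist_rpow_le hC₀ hD hx
        (mul_nonpos_of_nonpos_of_nonneg (min_le_right η 0) hq.le) hηq

end UpperAhlforsRegular

lemma integral_abs_mul_le_of_eLpNorm_le {α : Type*} [MeasurableSpace α] {μ : Measure α} {p q : ℝ}
    (hpq : p.HolderConjugate q) {g f : α → ℝ} (hg : AEStronglyMeasurable g μ)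
    (hf : MemLp f (ENNReal.ofReal p) μ) {M : ℝ} (hM : 0 ≤ M)
    (hgM : eLpNorm g (ENNReal.ofReal q) μ ≤ ENNReal.ofReal M) :
    ∫ y, |g y * f y| ∂μ ≤ M * (eLpNorm f (ENNReal.ofReal p) μ).toReal := by
  have := hpq.ennrealOfReal
  have hHolder : eLpNorm (g • f) 1 μ ≤ ENNReal.ofReal M * eLpNorm f (ENNReal.ofReal p) μ :=
    (eLpNorm_smul_le_mul_eLpNorm hf.1 hg).trans (by gcongr)
  calc ∫ y, |g y * f y| ∂μ = (eLpNorm (g • f) 1 μ).toReal := by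
        rw [eLpNorm_one_eq_lintegral_enorm, ← integral_norm_eq_lintegral_enorm (hg.smul hf.1)]
        rfl
    _ ≤ (ENNReal.ofReal M * eLpNorm f (ENNReal.ofReal p) μ).toReal :=
        ENNReal.toReal_mono (ENNReal.mul_ne_top ENNReal.ofReal_ne_top hf.2.ne) hHolder
    _ = M * (eLpNorm f (ENNReal.ofReal p) μ).toReal := by
        rw [ENNReal.toReal_mul, ENNReal.toReal_ofReal hM]

theorem sobolev_embedding_Linfty_general {X : Type*} [MetricSpace X] [MeasurableSpace X]
    (hdiam : ∀ x y : X, dist x y ≤ 1)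
    (D C₀ p s C₁ : ℝ) (hD : 0 < D) (hC₀ : 0 < C₀) (hp1 : 1 < p)
    (hsp : D / p < s * (D + 1)) (hC₁ : 0 < C₁) :
    ∃ C : ℝ, 0 < C ∧
      ∀ μ : Measure X,
        (∀ (x : X) (r : ℝ), 0 < r → μ (Metric.ball x r) ≤ ENNReal.ofReal (C₀ * r ^ D)) →
        ∀ K : X × X → ℝ, Measurable K →
          (∀ x y : X, |K (x, y)| ≤ C₁ * dist x y ^ (s * (D + 1) - D)) →
        ∀ f : X → ℝ, MemLp f (ENNReal.ofReal p) μ →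
        ∀ x : X,
          ∫ y, |K (x, y) * f y| ∂μ ≤ C * (eLpNorm f (ENNReal.ofReal p) μ).toReal := by
  obtain ⟨q, hpq⟩ : ∃ q, p.HolderConjugate q := ⟨_, .conjExponent hp1⟩
  set η := s * (D + 1) - D
  have hβD : -D < min η 0 * q := by
    have hq_inv : q⁻¹ = 1 - p⁻¹ := by linarith [hpq.inv_add_inv_eq_one]
    have hηq : -D < η * q := by
      rw [← div_lt_iff₀ hpq.symm.pos, neg_div, div_eq_mul_inv, hq_inv]
      linarith [div_eq_mul_inv D p]
    rw [min_mul_of_nonneg _ _ hpq.symm.nonneg, zero_mul]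
    exact lt_min hηq (neg_lt_zero.2 hD)
  set β := min η 0 * q
  set A := C₀ * 2 ^ (D - β) / (1 - 2 ^ (-β - D))
  have hA : 0 < A :=
    div_pos (by positivity) (sub_pos.2 (rpow_lt_one_of_one_lt_of_neg one_lt_two (by linarith)))
  refine ⟨C₁ * A ^ (1 / q), by positivity, fun μ hμ K hK hKb f hf x => ?_⟩
  have hKx : eLpNorm (fun y => K (x, y)) (ENNReal.ofReal q) μ ≤ ENNReal.ofReal (C₁ * A ^ (1 / q)) :=
    calc eLpNorm (fun y => K (x, y)) (ENNReal.ofReal q) μ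
        ≤ eLpNorm (C₁ • fun y => dist x y ^ η) (ENNReal.ofReal q) μ :=
          eLpNorm_mono_real fun y => hKb x y
      _ = ENNReal.ofReal C₁ * eLpNorm (fun y => dist x y ^ η) (ENNReal.ofReal q) μ := by
          rw [eLpNorm_const_smul, Real.enorm_eq_ofReal hC₁.le]
      _ ≤ ENNReal.ofReal C₁ * ENNReal.ofReal A ^ (1 / q) := by
          gcongr
          exact UpperAhlforsRegular.eLpNorm_dist_rpow_le hμ hC₀.le hD (hdiam x) hpq.symm.pos hβD
      _ = ENNReal.ofReal (C₁ * A ^ (1 / q)) := by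
          rw [ENNReal.ofReal_rpow_of_nonneg hA.le (by simp [hpq.symm.nonneg]),
            ENNReal.ofReal_mul hC₁.le]
  exact integral_abs_mul_le_of_eLpNorm_le hpq (hK.comp measurable_prodMk_left).aestronglyMeasurable
    hf (by positivity) hKx

/-- Corollary 3.4: the embedding `W^{s,p} ⊂ L^∞` when `s(D+1) > D/p`, formulated for an
abstract kernel satisfying `|K(x,y)| ≤ C₁ d(x,y)^(s(D+1)-D)`. -/
theorem sobolev_embedding_Linfty {X : Type*} [MetricSpace X] [MeasurableSpace X] [BorelSpace X]
    (hdiam : ∀ x y : X, dist x y ≤ 1)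
    (D C₀ p s C₁ : ℝ) (hD : 0 < D) (hC₀ : 0 < C₀) (hp1 : 1 < p)
    (hs0 : 0 < s) (hs1 : s < 1) (hsp : D / p < s * (D + 1)) (hC₁ : 0 < C₁) :
    ∃ C : ℝ, 0 < C ∧
      ∀ μ : Measure X,
        (∀ (x : X) (r : ℝ), 0 < r → μ (Metric.ball x r) ≤ ENNReal.ofReal (C₀ * r ^ D)) →
        ∀ K : X × X → ℝ, Measurable K →
          (∀ x y : X, |K (x, y)| ≤ C₁ * dist x y ^ (s * (D + 1) - D)) →
        ∀ f : X → ℝ, MemLp f (ENNReal.ofReal p) μ →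
        ∀ x : X,
          ∫ y, |K (x, y) * f y| ∂μ ≤ C * (eLpNorm f (ENNReal.ofReal p) μ).toReal :=
  sobolev_embedding_Linfty_general hdiam D C₀ p s C₁ hD hC₀ hp1 hsp hC₁
end

section
/- Let N ≥ 1 and L ≥ 1 be integers and set n = 2^N. Let a : Fin n → ℝ satisfy Σ_i a_i = 0, and let b : Fin n → ℝ. Then the following are equivalent: (i) for every index i, Σ_{k} (b_i − b_k) = (2^(N−1)/L)·(a_i − b_i), where the sum is over all k; (ii) b_i = a_i/(2L+1) for every index i. -/
/-- The harmonic-extension computation for the generalized Vicsek set `V(N,L)`: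
the harmonicity equations have the unique solution `b_i = a_i/(2L+1)`. -/
theorem vicsek_harmonic_values (N L : ℕ) (hN : 1 ≤ N) (hL : 1 ≤ L)
    (a b : Fin (2 ^ N) → ℝ) (ha : ∑ i, a i = 0) :
    (∀ i, ∑ k, (b i - b k) = ((2 : ℝ) ^ (N - 1) / (L : ℝ)) * (a i - b i)) ↔
      (∀ i, b i = a i / (2 * (L : ℝ) + 1)) := by
  obtain ⟨M, rfl⟩ : ∃ M, N = M + 1 := ⟨N - 1, (Nat.succ_pred_eq_of_pos hN).symm⟩
  simp only [Nat.add_sub_cancel]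
  have hL0 : (L : ℝ) ≠ 0 := Nat.cast_ne_zero.mpr (by omega)
  have hP : (0 : ℝ) < 2 ^ M := by positivity
  have hcard : (Finset.univ : Finset (Fin (2 ^ (M + 1)))).card = 2 ^ (M + 1) := by
    simp
  have key : ∀ i, ∑ k, (b i - b k) = (2 : ℝ) ^ (M + 1) * b i - ∑ k, b k := by
    intro i
    rw [Finset.sum_sub_distrib, Finset.sum_const, hcard, nsmul_eq_mul]
    push_cast
    ring
  constructor
  · intro h
    have hS : ∑ k, b k = 0 := by
      have hsum : ∑ i, (∑ k, (b i - b k)) =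
          ∑ i, ((2 : ℝ) ^ M / (L : ℝ)) * (a i - b i) :=
        Finset.sum_congr rfl fun i _ => h i
      simp only [key] at hsum
      have h0 : (0 : ℝ) = ∑ i, ((2 : ℝ) ^ M / (L : ℝ)) * (a i - b i) := by
        rw [← hsum, Finset.sum_sub_distrib, ← Finset.mul_sum, Finset.sum_const, hcard, nsmul_eq_mul]
        push_cast
        ring
      rw [← Finset.mul_sum, Finset.sum_sub_distrib, ha] at h0
      have h2 : ((2 : ℝ) ^ M / (L : ℝ)) ≠ 0 := by positivity
      have := (mul_eq_zero.mp h0.symm).resolve_left h2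
      linarith
    intro i
    have hi := h i
    rw [key i, hS] at hi
    have h2 : (2 : ℝ) ^ (M + 1) = 2 * 2 ^ M := by ring
    rw [h2] at hi
    have hL1 : (1 : ℝ) ≤ (L : ℝ) := by exact_mod_cast hL
    field_simp at hi ⊢
    nlinarith [hi, hP]
  · intro h i
    have hS : ∑ k, b k = 0 := by
      simp only [h, Finset.sum_div, ← Finset.sum_div] at *
      rw [ha, zero_div]
    rw [key i, hS, h i]
    have hL1 : (1 : ℝ) ≤ (L : ℝ) := by exact_mod_cast hL
    have h2 : (2 : ℝ) ^ (M + 1) = 2 * 2 ^ M := by ring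
    rw [h2]
    field_simp
    ring
end

section
/- Let N ≥ 1 and L ≥ 1 be integers and set n = 2^N. Let a : Fin n → ℝ satisfy Σ_i a_i = 0 and define b : Fin n → ℝ by b_i = a_i/(2L+1). Then (2^(N−1)/L)·Σ_i (a_i − b_i)² + (1/2)·Σ_i Σ_k (b_i − b_k)² = (1/(2L+1))·(1/2)·Σ_i Σ_k (a_i − a_k)². -/
lemma sum_sq_diff (n : ℕ) (f : Fin n → ℝ) :
    ∑ i, ∑ k, (f i - f k) ^ 2 =
      2 * n * ∑ i, (f i) ^ 2 - 2 * (∑ i, f i) ^ 2 := by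
  simp only [sub_sq, Finset.sum_add_distrib, Finset.sum_sub_distrib,
    Finset.sum_const, Finset.card_univ, Fintype.card_fin, ← Finset.sum_mul,
    ← Finset.mul_sum, nsmul_eq_mul]
  ring

/-- The energy renormalization computation for the generalized Vicsek set `V(N,L)`:
at the harmonic values `b_i = a_i/(2L+1)` the level-1 energy equals `(2L+1)⁻¹ 𝓔₀(a)`. -/
theorem vicsek_energy_renormalization (N L : ℕ) (hN : 1 ≤ N) (hL : 1 ≤ L)
    (a : Fin (2 ^ N) → ℝ) (ha : ∑ i, a i = 0)
    (b : Fin (2 ^ N) → ℝ) (hb : ∀ i, b i = a i / (2 * (L : ℝ) + 1)) :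
    ((2 : ℝ) ^ (N - 1) / (L : ℝ)) * ∑ i, (a i - b i) ^ 2 +
        (1 / 2) * ∑ i, ∑ k, (b i - b k) ^ 2 =
      (1 / (2 * (L : ℝ) + 1)) * ((1 / 2) * ∑ i, ∑ k, (a i - a k) ^ 2) := by
  have hc : (2 * (L : ℝ) + 1) ≠ 0 := by positivity
  have hL0 : (L : ℝ) ≠ 0 := by positivity
  have hbfun : b = fun i => a i / (2 * (L : ℝ) + 1) := funext hb
  subst hbfun
  have hsb : ∑ i, a i / (2 * (L : ℝ) + 1) = 0 := by
    rw [← Finset.sum_div, ha, zero_div]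
  rw [sum_sq_diff _ a, sum_sq_diff, ha, hsb]
  have h1 : ∑ i, (a i - a i / (2 * (L : ℝ) + 1)) ^ 2 =
      ((2 * (L : ℝ)) / (2 * (L : ℝ) + 1)) ^ 2 * ∑ i, (a i) ^ 2 := by
    rw [Finset.mul_sum]; congr 1; ext i; field_simp; ring
  have h2 : ∑ i, (a i / (2 * (L : ℝ) + 1)) ^ 2 =
      (1 / (2 * (L : ℝ) + 1)) ^ 2 * ∑ i, (a i) ^ 2 := by
    rw [Finset.mul_sum]; congr 1; ext i; field_simp
  rw [h1, h2]
  have hpow : ((2 : ℝ) ^ (N - 1)) * 2 = (2 : ℝ) ^ N := by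
    rw [← pow_succ, Nat.sub_add_cancel hN]
  have hcard : ((2 ^ N : ℕ) : ℝ) = (2 : ℝ) ^ N := by push_cast; ring
  rw [hcard, ← hpow]
  field_simp
  ring
end

section
/- Let N ≥ 1 and L ≥ 1 be integers and set n = 2^N. Let a : Fin n → ℝ satisfy Σ_i a_i = 0. Then for every b : Fin n → ℝ, (2^(N−1)/L)·Σ_i (a_i − b_i)² + (1/2)·Σ_i Σ_k (b_i − b_k)² ≥ (1/(2L+1))·(1/2)·Σ_i Σ_k (a_i − a_k)². -/
/-!
Split `a_i - a_k = ((a_i - b_i) - (a_k - b_k)) + (b_i - b_k)` and apply, on each edge of the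
complete graph, the weighted inequality `(u + v)² / (s + 1) ≤ u² / s + v²` with `s = 2L`. This
bounds the energy `½ ∑ᵢ ∑ₖ (aᵢ - aₖ)²` of `a`, divided by `2L + 1`, by `1/(2L)` times the energy
of `a - b` plus the energy of `b`; and on `n` vertices the energy of any `x` is at most `n ∑ xᵢ²`.
-/

open Finset

theorem sq_add_div_add_one_le {s : ℝ} (hs : 0 < s) (u v : ℝ) :
    (u + v) ^ 2 / (s + 1) ≤ u ^ 2 / s + v ^ 2 := by
  rw [div_add' _ _ _ hs.ne', div_le_div_iff₀ (by positivity) hs]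
  nlinarith [sq_nonneg (u - s * v)]

section CompleteGraph

variable {ι : Type*} [Fintype ι]

theorem sum_sum_sub_sq_eq (x : ι → ℝ) :
    ∑ i, ∑ k, (x i - x k) ^ 2 =
      2 * Fintype.card ι * ∑ i, x i ^ 2 - 2 * (∑ i, x i) ^ 2 := by
  simp only [sub_sq, sum_add_distrib, sum_sub_distrib, sum_const, card_univ, nsmul_eq_mul,
    ← mul_sum, ← sum_mul, mul_assoc]
  ring

theorem sum_sum_sub_sq_le (x : ι → ℝ) :
    ∑ i, ∑ k, (x i - x k) ^ 2 ≤ 2 * Fintype.card ι * ∑ i, x i ^ 2 := by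
  rw [sum_sum_sub_sq_eq]
  nlinarith [sq_nonneg (∑ i, x i)]

theorem sum_sum_sub_sq_div_add_one_le {s : ℝ} (hs : 0 < s) (a b : ι → ℝ) :
    (∑ i, ∑ k, (a i - a k) ^ 2) / (s + 1) ≤
      2 * Fintype.card ι / s * ∑ i, (a i - b i) ^ 2 + ∑ i, ∑ k, (b i - b k) ^ 2 :=
  calc (∑ i, ∑ k, (a i - a k) ^ 2) / (s + 1)
      = ∑ i, ∑ k, (((a i - b i) - (a k - b k)) + (b i - b k)) ^ 2 / (s + 1) := by
        simp only [sum_div]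
        exact sum_congr rfl fun i _ => sum_congr rfl fun k _ => by ring
    _ ≤ ∑ i, ∑ k, (((a i - b i) - (a k - b k)) ^ 2 / s + (b i - b k) ^ 2) := by
        gcongr with i _ k _
        exact sq_add_div_add_one_le hs _ _
    _ = (∑ i, ∑ k, ((a i - b i) - (a k - b k)) ^ 2) / s + ∑ i, ∑ k, (b i - b k) ^ 2 := by
        simp only [sum_add_distrib, sum_div]
    _ ≤ 2 * Fintype.card ι / s * ∑ i, (a i - b i) ^ 2 + ∑ i, ∑ k, (b i - b k) ^ 2 := by
        rw [div_mul_eq_mul_div]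
        gcongr
        exact sum_sum_sub_sq_le (fun i => a i - b i)

end CompleteGraph

theorem vicsek_energy_minimization_general (N L : ℕ) (hL : 1 ≤ L)
    (a : Fin (2 ^ N) → ℝ) (b : Fin (2 ^ N) → ℝ) :
    (1 / (2 * (L : ℝ) + 1)) * ((1 / 2) * ∑ i, ∑ k, (a i - a k) ^ 2) ≤
      ((2 : ℝ) ^ (N - 1) / (L : ℝ)) * ∑ i, (a i - b i) ^ 2 +
        (1 / 2) * ∑ i, ∑ k, (b i - b k) ^ 2 := by
  have hs : (0 : ℝ) < 2 * L := by positivity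
  have hbound := sum_sum_sub_sq_div_add_one_le hs a b
  have hcoef : 2 * (Fintype.card (Fin (2 ^ N)) : ℝ) / (2 * L) ≤ 2 * (2 ^ (N - 1) / L) := by
    have hpow : (2 : ℝ) ^ N ≤ 2 * 2 ^ (N - 1) := by
      rw [← pow_succ']
      exact pow_le_pow_right₀ one_le_two (by omega)
    rw [Fintype.card_fin, Nat.cast_pow, Nat.cast_ofNat, mul_div_mul_left _ _ two_ne_zero,
      mul_div_assoc']
    gcongr
  have hab : 0 ≤ ∑ i, (a i - b i) ^ 2 := by positivity
  rw [← one_div_mul_eq_div] at hbound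
  linarith [mul_le_mul_of_nonneg_right hcoef hab]

/-- The minimization statement underlying `𝓔₁ = (2L+1)⁻¹ 𝓔₀` for the generalized Vicsek
set `V(N,L)`: every choice of central values `b` gives at least the renormalized energy. -/
theorem vicsek_energy_minimization (N L : ℕ) (hN : 1 ≤ N) (hL : 1 ≤ L)
    (a : Fin (2 ^ N) → ℝ) (ha : ∑ i, a i = 0) (b : Fin (2 ^ N) → ℝ) :
    (1 / (2 * (L : ℝ) + 1)) * ((1 / 2) * ∑ i, ∑ k, (a i - a k) ^ 2) ≤
      ((2 : ℝ) ^ (N - 1) / (L : ℝ)) * ∑ i, (a i - b i) ^ 2 +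
        (1 / 2) * ∑ i, ∑ k, (b i - b k) ^ 2 :=
  vicsek_energy_minimization_general N L hL a b
end
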